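/- For every integer n ≥ 4, the minimal square perfecter of n! satisfies e^{ϑ(n) − ϑ(n/2)} ≤ 𝔖(n!), and moreover the explicit bounds exp(n/2 − (793/200)·n·(1/log n + 1/(2·log(n/2)))) < 𝔖(n!) < exp(n + 793·n/(200·log n)) hold. -/

import Mathlib

open Finset

/-- The Chebyshev theta function `ϑ(x) = ∑_{p ≤ x, p prime} log p` for real `x`. -/
noncomputable def thetaR (x : ℝ) : ℝ :=
  ∑ p ∈ (Finset.range (⌊x⌋₊ + 1)).filter Nat.Prime, Real.log p

/-- The minimal square perfecter of `N`: the least positive integer `m`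
such that `m * N` is a perfect square. -/
noncomputable def minSquarePerfecter (N : ℕ) : ℕ :=
  sInf {m : ℕ | 1 ≤ m ∧ ∃ l : ℕ, m * N = l ^ 2}

namespace MSPaux


/-- parity weight -/
def W (n p : ℕ) : ℕ := ∑ i ∈ Finset.Ico 1 (n+1), (n / p ^ i) % 2

/-- primes with odd multiplicity in n! -/
def Sset (n : ℕ) : Finset ℕ :=
  (Finset.range (n+1)).filter (fun p => p.Prime ∧ Odd ((Nat.factorial n).factorization p))

def Q (n : ℕ) : ℕ := ∏ p ∈ Sset n, p

lemma legendre {p : ℕ} (hp : p.Prime) (m : ℕ) :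
    (Nat.factorial m).factorization p = ∑ i ∈ Finset.Ico 1 (m+1), m / p ^ i := by
  have hb : Nat.log p m < m + 1 := Nat.lt_succ_of_le (Nat.log_le_self _ _)
  have h1 := hp.emultiplicity_factorial hb
  have h2 := multiplicity_eq_of_emultiplicity_eq_some h1
  rw [← Nat.multiplicity_eq_factorization hp (Nat.factorial_ne_zero m), h2]

lemma legendre' {p : ℕ} (hp : p.Prime) {k n : ℕ} (hk : k ≤ n) :
    (Nat.factorial k).factorization p = ∑ i ∈ Finset.Ico 1 (n+1), k / p ^ i := by
  rw [legendre hp k]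
  apply Finset.sum_subset
  · exact Finset.Ico_subset_Ico le_rfl (by omega)
  · intro i hi hni
    simp only [Finset.mem_Ico] at hi hni
    have h2i : i + 1 ≤ 2 ^ i := Nat.succ_le_of_lt (Nat.lt_two_pow_self (n := i))
    have : k < p ^ i := by
      calc k < i + 1 := by omega
      _ ≤ 2 ^ i := h2i
      _ ≤ p ^ i := Nat.pow_le_pow_left hp.two_le i
    exact Nat.div_eq_of_lt this

lemma fact_decomp {p : ℕ} (hp : p.Prime) (n : ℕ) :
    (Nat.factorial n).factorization p
      = 2 * ((Nat.factorial (n/2)).factorization p) + W n p := by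
  rw [legendre hp n, legendre' hp (Nat.div_le_self n 2), W, Finset.mul_sum,
    ← Finset.sum_add_distrib]
  apply Finset.sum_congr rfl
  intro i _
  have h1 : n / 2 / p ^ i = n / p ^ i / 2 := by
    rw [Nat.div_div_eq_div_mul, Nat.div_div_eq_div_mul, Nat.mul_comm]
  rw [h1]
  omega

lemma parity_iff {p : ℕ} (hp : p.Prime) (n : ℕ) :
    Odd ((Nat.factorial n).factorization p) ↔ Odd (W n p) := by
  rw [Nat.odd_iff, Nat.odd_iff, fact_decomp hp n]
  omega

lemma W_le_log {p : ℕ} (hp : p.Prime) (n : ℕ) :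
    W n p ≤ Nat.log p n := by
  rcases Nat.eq_zero_or_pos n with h0 | h0
  · subst h0; simp [W]
  have hL : Nat.log p n + 1 ≤ n + 1 := by
    have := Nat.log_le_self p n; omega
  rw [W, ← Finset.sum_Ico_consecutive _ (by omega : 1 ≤ Nat.log p n + 1) hL]
  have h2 : ∑ i ∈ Finset.Ico (Nat.log p n + 1) (n+1), (n / p ^ i) % 2 = 0 := by
    apply Finset.sum_eq_zero
    intro i hi
    simp only [Finset.mem_Ico] at hi
    have : n < p ^ i := Nat.lt_pow_of_log_lt hp.one_lt (by omega)
    rw [Nat.div_eq_of_lt this]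
    rfl
  rw [h2, add_zero]
  calc ∑ i ∈ Finset.Ico 1 (Nat.log p n + 1), (n / p ^ i) % 2
      ≤ ∑ _i ∈ Finset.Ico 1 (Nat.log p n + 1), 1 :=
        Finset.sum_le_sum (fun i _ => by omega)
    _ = Nat.log p n := by simp

lemma W_of_sq_gt {p : ℕ} (hp : p.Prime) {n : ℕ} (hn : 1 ≤ n) (h : n < p ^ 2) :
    W n p = (n / p) % 2 := by
  rw [W, Finset.sum_eq_single_of_mem 1 (by simp [Finset.mem_Ico]; omega)]
  · rw [pow_one]
  · intro i hi hne
    simp only [Finset.mem_Ico] at hi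
    have h2 : p ^ 2 ≤ p ^ i := Nat.pow_le_pow_right hp.pos (by omega)
    rw [Nat.div_eq_of_lt (lt_of_lt_of_le h h2)]
    rfl

lemma mem_Sset_iff {n p : ℕ} :
    p ∈ Sset n ↔ p.Prime ∧ Odd (W n p) := by
  constructor
  · rintro hp
    simp only [Sset, Finset.mem_filter] at hp
    exact ⟨hp.2.1, (parity_iff hp.2.1 n).1 hp.2.2⟩
  · rintro ⟨hp, hw⟩
    have hpn : p ≤ n := by
      by_contra hgt
      push_neg at hgt
      have : W n p = 0 := by
        apply Finset.sum_eq_zero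
        intro i hi
        simp only [Finset.mem_Ico] at hi
        have : n < p ^ i := by
          calc n < p := hgt
          _ = p ^ 1 := (pow_one p).symm
          _ ≤ p ^ i := Nat.pow_le_pow_right hp.pos (by omega)
        rw [Nat.div_eq_of_lt this]
        rfl
      rw [this] at hw
      exact (Nat.not_odd_iff_even.2 Even.zero) hw
    simp only [Sset, Finset.mem_filter, Finset.mem_range]
    exact ⟨by omega, hp, (parity_iff hp n).2 hw⟩

lemma Q_pos (n : ℕ) : 0 < Q n :=
  Finset.prod_pos (fun p hp => (mem_Sset_iff.1 hp).1.pos)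

lemma prod_primes_factorization {S : Finset ℕ} (hS : ∀ p ∈ S, p.Prime) (e : ℕ → ℕ) (q : ℕ) :
    (∏ p ∈ S, p ^ e p).factorization q = if q ∈ S then e q else 0 := by
  rw [Nat.factorization_prod (fun p hp => pow_ne_zero _ (hS p hp).ne_zero)]
  rw [Finsupp.finset_sum_apply]
  have : ∀ p ∈ S, ((p ^ e p).factorization) q = if p = q then e p else 0 := by
    intro p hp
    rw [(hS p hp).factorization_pow, Finsupp.single_apply]
  rw [Finset.sum_congr rfl this, Finset.sum_ite_eq' S q e]

lemma Q_factorization (n q : ℕ) :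
    (Q n).factorization q = if q ∈ Sset n then 1 else 0 := by
  have : Q n = ∏ p ∈ Sset n, p ^ (1 : ℕ) := by simp [Q]
  rw [this, prod_primes_factorization (fun p hp => (mem_Sset_iff.1 hp).1) (fun _ => 1) q]


lemma Q_mul_square (n : ℕ) : ∃ l : ℕ, Q n * Nat.factorial n = l ^ 2 := by
  set N := Q n * Nat.factorial n with hN
  have hN0 : N ≠ 0 := Nat.mul_ne_zero (Q_pos n).ne' (Nat.factorial_ne_zero n)
  have heven : ∀ q, Even (N.factorization q) := by
    intro q
    rw [hN, Nat.factorization_mul (Q_pos n).ne' (Nat.factorial_ne_zero n)]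
    simp only [Finsupp.coe_add, Pi.add_apply]
    rw [Q_factorization]
    by_cases hq : q ∈ Sset n
    · simp only [hq, if_true]
      have : Odd ((Nat.factorial n).factorization q) := by
        simp only [Sset, Finset.mem_filter] at hq
        exact hq.2.2
      rw [Nat.odd_iff] at this
      rw [Nat.even_iff]
      omega
    · simp only [hq, if_false, zero_add]
      by_cases hqp : q.Prime
      · have : ¬ Odd ((Nat.factorial n).factorization q) := by
          intro hodd
          apply hq
          simp only [Sset, Finset.mem_filter, Finset.mem_range]
          refine ⟨?_, hqp, hodd⟩
          have : q ∣ Nat.factorial n := by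
            rw [hqp.dvd_iff_one_le_factorization (Nat.factorial_ne_zero n)]
            rw [Nat.odd_iff] at hodd
            omega
          have := (Nat.Prime.dvd_factorial hqp).1 this
          omega
        rw [Nat.not_odd_iff_even, Nat.even_iff] at this
        rw [Nat.even_iff]
        omega
      · rw [Nat.factorization_eq_zero_of_not_prime _ hqp]
        exact Even.zero
  refine ⟨N.factorization.prod fun p k => p ^ (k / 2), ?_⟩
  have : (N.factorization.prod fun p k => p ^ (k / 2)) ^ 2
      = N.factorization.prod fun p k => p ^ k := by
    rw [Finsupp.prod, Finsupp.prod, ← Finset.prod_pow]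
    apply Finset.prod_congr rfl
    intro q _
    rw [← pow_mul]
    congr 1
    have := heven q
    rw [Nat.even_iff] at this
    omega
  rw [this, Nat.factorization_prod_pow_eq_self hN0]

lemma Q_dvd {n m : ℕ} (hm : 1 ≤ m) (h : ∃ l, m * Nat.factorial n = l ^ 2) : Q n ∣ m := by
  obtain ⟨l, hl⟩ := h
  have hm0 : m ≠ 0 := by omega
  have hl0 : l ≠ 0 := by
    intro h0
    rw [h0] at hl
    simp at hl
    rcases hl with h | h
    · omega
    · exact Nat.factorial_ne_zero n h
  apply Finset.prod_primes_dvd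
  · exact fun p hp => (mem_Sset_iff.1 hp).1.prime
  · intro p hp
    have hpp := (mem_Sset_iff.1 hp).1
    have hodd : Odd ((Nat.factorial n).factorization p) := by
      simp only [Sset, Finset.mem_filter] at hp
      exact hp.2.2
    rw [hpp.dvd_iff_one_le_factorization hm0]
    have := congrArg (fun x => x.factorization p) hl
    rw [Nat.factorization_mul hm0 (Nat.factorial_ne_zero n), Nat.factorization_pow] at this
    simp only [Finsupp.coe_add, Pi.add_apply, Finsupp.smul_apply, smul_eq_mul] at this
    rw [Nat.odd_iff] at hodd
    omega

lemma msp_eq (n : ℕ) : sInf {m : ℕ | 1 ≤ m ∧ ∃ l : ℕ, m * Nat.factorial n = l ^ 2} = Q n := by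
  have hQmem : Q n ∈ {m : ℕ | 1 ≤ m ∧ ∃ l : ℕ, m * Nat.factorial n = l ^ 2} :=
    ⟨Q_pos n, Q_mul_square n⟩
  apply le_antisymm
  · exact Nat.sInf_le hQmem
  · have hmem := Nat.sInf_mem ⟨Q n, hQmem⟩
    obtain ⟨h1, h2⟩ := hmem
    exact Nat.le_of_dvd (by omega) (Q_dvd h1 h2)

-- divisibility bounds
lemma up_dvd {n : ℕ} (hn : 1 ≤ n) :
    Nat.factorial (n/2) * Nat.factorial (n/2) * Q n
      ∣ Nat.factorial n * primorial (Nat.sqrt n) := by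
  set k := n / 2 with hk
  have h1 : Nat.factorial k * Nat.factorial k * Q n ≠ 0 :=
    Nat.mul_ne_zero (Nat.mul_ne_zero (Nat.factorial_ne_zero k) (Nat.factorial_ne_zero k))
      (Q_pos n).ne'
  have h2 : Nat.factorial n * primorial (Nat.sqrt n) ≠ 0 :=
    Nat.mul_ne_zero (Nat.factorial_ne_zero n) (primorial_pos _).ne'
  rw [← Nat.factorization_le_iff_dvd h1 h2]
  intro q
  rw [Nat.factorization_mul (Nat.mul_ne_zero (Nat.factorial_ne_zero k) (Nat.factorial_ne_zero k))
      (Q_pos n).ne',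
    Nat.factorization_mul (Nat.factorial_ne_zero k) (Nat.factorial_ne_zero k),
    Nat.factorization_mul (Nat.factorial_ne_zero n) (primorial_pos _).ne']
  simp only [Finsupp.coe_add, Pi.add_apply]
  by_cases hq : q.Prime
  · have hprim : (primorial (Nat.sqrt n)).factorization q
        = if q ∈ (Finset.range (Nat.sqrt n + 1)).filter Nat.Prime then 1 else 0 := by
      have : primorial (Nat.sqrt n) = ∏ p ∈ (Finset.range (Nat.sqrt n + 1)).filter Nat.Prime, p ^ (1:ℕ) := by
        simp [primorial]
      rw [this, prod_primes_factorization (fun p hp => (Finset.mem_filter.1 hp).2) (fun _ => 1) q]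
    rw [hprim, Q_factorization, fact_decomp hq n]
    simp only [← hk]
    by_cases hqS : q ∈ Sset n
    · simp only [hqS, if_true]
      have hodd : Odd (W n q) := (mem_Sset_iff.1 hqS).2
      have : 1 ≤ W n q := by
        rcases hodd with ⟨c, hc⟩; omega
      split <;> omega
    · simp only [hqS, if_false]
      split <;> omega
  · simp [Nat.factorization_eq_zero_of_not_prime _ hq]

lemma down_dvd {n : ℕ} (hn : 1 ≤ n) :
    Nat.factorial n ∣ Nat.factorial (n/2) * Nat.factorial (n/2) * Q n
      * ∏ p ∈ (Finset.range (Nat.sqrt n + 1)).filter Nat.Prime, p ^ (Nat.log p n) := by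
  set k := n / 2 with hk
  set T := ∏ p ∈ (Finset.range (Nat.sqrt n + 1)).filter Nat.Prime, p ^ (Nat.log p n) with hT
  have hT0 : T ≠ 0 := by
    rw [hT]
    exact (Finset.prod_pos (fun p hp => pow_pos (Finset.mem_filter.1 hp).2.pos _)).ne'
  have h1 : Nat.factorial k * Nat.factorial k * Q n * T ≠ 0 :=
    Nat.mul_ne_zero (Nat.mul_ne_zero (Nat.mul_ne_zero (Nat.factorial_ne_zero k)
      (Nat.factorial_ne_zero k)) (Q_pos n).ne') hT0
  rw [← Nat.factorization_le_iff_dvd (Nat.factorial_ne_zero n) h1]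
  intro q
  rw [Nat.factorization_mul (Nat.mul_ne_zero (Nat.mul_ne_zero (Nat.factorial_ne_zero k)
      (Nat.factorial_ne_zero k)) (Q_pos n).ne') hT0,
    Nat.factorization_mul (Nat.mul_ne_zero (Nat.factorial_ne_zero k) (Nat.factorial_ne_zero k))
      (Q_pos n).ne',
    Nat.factorization_mul (Nat.factorial_ne_zero k) (Nat.factorial_ne_zero k)]
  simp only [Finsupp.coe_add, Pi.add_apply]
  by_cases hq : q.Prime
  · have hTfac : T.factorization q
        = if q ∈ (Finset.range (Nat.sqrt n + 1)).filter Nat.Prime then Nat.log q n else 0 := by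
      rw [hT, prod_primes_factorization (fun p hp => (Finset.mem_filter.1 hp).2)
        (fun p => Nat.log p n) q]
    rw [hTfac, Q_factorization, fact_decomp hq n]
    simp only [← hk]
    by_cases hqs : q ∈ (Finset.range (Nat.sqrt n + 1)).filter Nat.Prime
    · simp only [hqs, if_true]
      have := W_le_log hq n
      split <;> omega
    · simp only [hqs, if_false]
      -- q > sqrt n, so q^2 > n and W = n/q % 2 ≤ 1; if W odd then q ∈ Sset
      have hqgt : Nat.sqrt n < q := by
        by_contra hle
        push_neg at hle
        exact hqs (Finset.mem_filter.2 ⟨Finset.mem_range.2 (by omega), hq⟩)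
      have hsq : n < q ^ 2 := Nat.sqrt_lt'.1 hqgt
      have hW : W n q = (n / q) % 2 := W_of_sq_gt hq hn hsq
      have hW1 : W n q ≤ 1 := by rw [hW]; omega
      by_cases hodd : Odd (W n q)
      · have : q ∈ Sset n := mem_Sset_iff.2 ⟨hq, hodd⟩
        simp only [this, if_true]
        omega
      · rw [Nat.not_odd_iff_even, Nat.even_iff] at hodd
        have : W n q = 0 := by omega
        split <;> omega
  · simp [Nat.factorization_eq_zero_of_not_prime _ hq]


lemma prime_mid_mem {n p : ℕ} (hn : 4 ≤ n) (hp : p.Prime) (hlow : n/2 < p) (hup : p ≤ n) :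
    p ∈ Sset n := by
  have hk2 : 2 ≤ n / 2 := by omega
  have hsq : n < p ^ 2 := by
    have h1 : n / 2 + 1 ≤ p := hlow
    have h2 : n < (n/2 + 1) ^ 2 := by
      have ha : n ≤ 2 * (n/2) + 1 := by omega
      nlinarith [hk2]
    calc n < (n/2+1)^2 := h2
    _ ≤ p ^ 2 := Nat.pow_le_pow_left h1 2
  have hdiv : n / p = 1 := by
    apply Nat.div_eq_of_lt_le
    · omega
    · omega
  have hW : W n p = 1 := by
    rw [W_of_sq_gt hp (by omega) hsq, hdiv]
  exact mem_Sset_iff.2 ⟨hp, by rw [hW]; exact odd_one⟩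

lemma Q_ge_three {n : ℕ} (hn : 4 ≤ n) : 3 ≤ Q n := by
  obtain ⟨p, hp, hlow, hup⟩ := Nat.exists_prime_lt_and_le_two_mul (n/2) (by omega)
  have hpn : p ≤ n := le_trans hup (by omega)
  have hmem : p ∈ Sset n := prime_mid_mem hn hp hlow hpn
  have hdvd : p ∣ Q n := Finset.dvd_prod_of_mem _ hmem
  have := Nat.le_of_dvd (Q_pos n) hdvd
  omega

lemma mid_prod_dvd {n : ℕ} (hn : 4 ≤ n) :
    ∏ p ∈ (Finset.range (n+1)).filter Nat.Prime \ (Finset.range (n/2+1)).filter Nat.Prime, p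
      ∣ Q n := by
  apply Finset.prod_dvd_prod_of_subset
  intro p hp
  simp only [Finset.mem_sdiff, Finset.mem_filter, Finset.mem_range] at hp
  obtain ⟨⟨hpn, hpp⟩, hnot⟩ := hp
  have hlow : n/2 < p := by
    by_contra hle
    push_neg at hle
    exact hnot ⟨by omega, hpp⟩
  exact prime_mid_mem hn hpp hlow (by omega)

lemma two_pow_le_choose (n : ℕ) : 2 ^ n ≤ (n + 1) * n.choose (n/2) := by
  rw [← Nat.sum_range_choose n]
  calc ∑ m ∈ Finset.range (n+1), n.choose m
      ≤ ∑ _m ∈ Finset.range (n+1), n.choose (n/2) :=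
        Finset.sum_le_sum (fun m _ => Nat.choose_le_middle m n)
    _ = (n+1) * n.choose (n/2) := by simp [Finset.sum_const, Finset.card_range, mul_comm]

lemma choose_le_two_pow (n : ℕ) : n.choose (n/2) ≤ 2 ^ n := by
  rw [← Nat.sum_range_choose n]
  exact Finset.single_le_sum (fun i _ => Nat.zero_le _)
    (Finset.mem_range.2 (by omega : n/2 < n+1))

lemma nfac_le (n : ℕ) :
    Nat.factorial n ≤ Nat.factorial (n/2) * Nat.factorial (n/2) * (n.choose (n/2) * (n/2+1)) := by
  have hk : n/2 ≤ n := Nat.div_le_self n 2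
  have h1 : n.choose (n/2) * Nat.factorial (n/2) * Nat.factorial (n - n/2) = Nat.factorial n :=
    Nat.choose_mul_factorial_mul_factorial hk
  have h2 : Nat.factorial (n - n/2) ≤ Nat.factorial (n/2) * (n/2+1) := by
    have : n - n/2 ≤ n/2 + 1 := by omega
    calc Nat.factorial (n - n/2) ≤ Nat.factorial (n/2+1) := Nat.factorial_le this
    _ = (n/2+1) * Nat.factorial (n/2) := Nat.factorial_succ _
    _ = Nat.factorial (n/2) * (n/2+1) := by ring
  calc Nat.factorial n = n.choose (n/2) * Nat.factorial (n/2) * Nat.factorial (n - n/2) := h1.symm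
  _ ≤ n.choose (n/2) * Nat.factorial (n/2) * (Nat.factorial (n/2) * (n/2+1)) :=
      Nat.mul_le_mul_left _ h2
  _ = Nat.factorial (n/2) * Nat.factorial (n/2) * (n.choose (n/2) * (n/2+1)) := by ring

lemma fac_sq_choose_le (n : ℕ) :
    Nat.factorial (n/2) * Nat.factorial (n/2) * n.choose (n/2) ≤ Nat.factorial n := by
  have hk : n/2 ≤ n := Nat.div_le_self n 2
  have h1 : n.choose (n/2) * Nat.factorial (n/2) * Nat.factorial (n - n/2) = Nat.factorial n :=
    Nat.choose_mul_factorial_mul_factorial hk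
  have h2 : Nat.factorial (n/2) ≤ Nat.factorial (n - n/2) :=
    Nat.factorial_le (by omega)
  calc Nat.factorial (n/2) * Nat.factorial (n/2) * n.choose (n/2)
      ≤ Nat.factorial (n/2) * Nat.factorial (n - n/2) * n.choose (n/2) :=
        Nat.mul_le_mul_right _ (Nat.mul_le_mul_left _ h2)
  _ = n.choose (n/2) * Nat.factorial (n/2) * Nat.factorial (n - n/2) := by ring
  _ = Nat.factorial n := h1

lemma T_le {n : ℕ} (hn : 4 ≤ n) :
    ∏ p ∈ (Finset.range (Nat.sqrt n + 1)).filter Nat.Prime, p ^ (Nat.log p n)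
      ≤ n ^ (Nat.sqrt n) := by
  have hcard : ((Finset.range (Nat.sqrt n + 1)).filter Nat.Prime).card ≤ Nat.sqrt n := by
    have hsub : (Finset.range (Nat.sqrt n + 1)).filter Nat.Prime ⊆ Finset.Ico 2 (Nat.sqrt n + 1) := by
      intro p hp
      simp only [Finset.mem_filter, Finset.mem_range] at hp
      exact Finset.mem_Ico.2 ⟨hp.2.two_le, hp.1⟩
    calc ((Finset.range (Nat.sqrt n + 1)).filter Nat.Prime).card
        ≤ (Finset.Ico 2 (Nat.sqrt n + 1)).card := Finset.card_le_card hsub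
      _ = Nat.sqrt n + 1 - 2 := Nat.card_Ico 2 (Nat.sqrt n + 1)
      _ ≤ Nat.sqrt n := by omega
  calc ∏ p ∈ (Finset.range (Nat.sqrt n + 1)).filter Nat.Prime, p ^ (Nat.log p n)
      ≤ ∏ _p ∈ (Finset.range (Nat.sqrt n + 1)).filter Nat.Prime, n :=
        Finset.prod_le_prod (fun p _ => Nat.zero_le _)
          (fun p hp => Nat.pow_log_le_self p (by omega))
    _ = n ^ ((Finset.range (Nat.sqrt n + 1)).filter Nat.Prime).card := by
        rw [Finset.prod_const]
    _ ≤ n ^ (Nat.sqrt n) := Nat.pow_le_pow_right (by omega) hcard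

lemma Q_upper {n : ℕ} (hn : 4 ≤ n) :
    Q n ≤ 2 ^ n * n * 4 ^ (Nat.sqrt n) := by
  have hfac2 : 0 < Nat.factorial (n/2) * Nat.factorial (n/2) :=
    Nat.mul_pos (Nat.factorial_pos _) (Nat.factorial_pos _)
  have h1 : Nat.factorial (n/2) * Nat.factorial (n/2) * Q n
      ≤ Nat.factorial n * primorial (Nat.sqrt n) :=
    Nat.le_of_dvd (Nat.mul_pos (Nat.factorial_pos n) (primorial_pos _)) (up_dvd (by omega))
  have h2 : Nat.factorial n * primorial (Nat.sqrt n)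
      ≤ (Nat.factorial (n/2) * Nat.factorial (n/2)) * ((n.choose (n/2) * (n/2+1)) * 4 ^ (Nat.sqrt n)) := by
    calc Nat.factorial n * primorial (Nat.sqrt n)
        ≤ (Nat.factorial (n/2) * Nat.factorial (n/2) * (n.choose (n/2) * (n/2+1))) * 4 ^ (Nat.sqrt n) :=
          Nat.mul_le_mul (nfac_le n) (primorial_le_4_pow _)
      _ = (Nat.factorial (n/2) * Nat.factorial (n/2)) * ((n.choose (n/2) * (n/2+1)) * 4 ^ (Nat.sqrt n)) := by ring
  have h3 : Q n ≤ (n.choose (n/2) * (n/2+1)) * 4 ^ (Nat.sqrt n) := by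
    have := le_trans h1 h2
    exact Nat.le_of_mul_le_mul_left (by linarith [this]) hfac2
  calc Q n ≤ (n.choose (n/2) * (n/2+1)) * 4 ^ (Nat.sqrt n) := h3
  _ ≤ (2^n * n) * 4 ^ (Nat.sqrt n) := by
      apply Nat.mul_le_mul_right
      exact Nat.mul_le_mul (choose_le_two_pow n) (by omega)
  _ = 2 ^ n * n * 4 ^ (Nat.sqrt n) := by ring

lemma Q_lower {n : ℕ} (hn : 4 ≤ n) :
    2 ^ n ≤ (n+1) * Q n * n ^ (Nat.sqrt n) := by
  set T := ∏ p ∈ (Finset.range (Nat.sqrt n + 1)).filter Nat.Prime, p ^ (Nat.log p n) with hT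
  have hfac2 : 0 < Nat.factorial (n/2) * Nat.factorial (n/2) :=
    Nat.mul_pos (Nat.factorial_pos _) (Nat.factorial_pos _)
  have hT0 : 0 < T :=
    Finset.prod_pos (fun p hp => pow_pos (Finset.mem_filter.1 hp).2.pos _)
  have h1 : Nat.factorial n ≤ Nat.factorial (n/2) * Nat.factorial (n/2) * Q n * T :=
    Nat.le_of_dvd (Nat.mul_pos (Nat.mul_pos hfac2 (Q_pos n)) hT0) (down_dvd (by omega))
  have h2 : Nat.factorial (n/2) * Nat.factorial (n/2) * n.choose (n/2)
      ≤ Nat.factorial (n/2) * Nat.factorial (n/2) * (Q n * T) := by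
    calc Nat.factorial (n/2) * Nat.factorial (n/2) * n.choose (n/2)
        ≤ Nat.factorial n := fac_sq_choose_le n
      _ ≤ Nat.factorial (n/2) * Nat.factorial (n/2) * Q n * T := h1
      _ = Nat.factorial (n/2) * Nat.factorial (n/2) * (Q n * T) := by ring
  have h3 : n.choose (n/2) ≤ Q n * T := Nat.le_of_mul_le_mul_left h2 hfac2
  calc 2 ^ n ≤ (n+1) * n.choose (n/2) := two_pow_le_choose n
  _ ≤ (n+1) * (Q n * T) := Nat.mul_le_mul_left _ h3
  _ ≤ (n+1) * (Q n * n ^ (Nat.sqrt n)) :=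
      Nat.mul_le_mul_left _ (Nat.mul_le_mul_left _ (T_le hn))
  _ = (n+1) * Q n * n ^ (Nat.sqrt n) := by ring
  
lemma Q_le_primorial (n : ℕ) : Q n ≤ primorial n := by
  have : primorial n = ∏ p ∈ (Finset.range (n+1)).filter Nat.Prime, p := rfl
  rw [this, Q]
  apply Finset.prod_le_prod_of_subset_of_one_le'
  · intro p hp
    simp only [Sset, Finset.mem_filter] at hp ⊢
    exact ⟨hp.1, hp.2.1⟩
  · intro p hp _
    exact (Finset.mem_filter.1 hp).2.one_lt.le


lemma part1 {n : ℕ} (hn : 4 ≤ n) :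
    Real.exp (thetaR n - thetaR ((n : ℝ) / 2)) ≤ (Q n : ℝ) := by
  have hfloor1 : ⌊(n:ℝ)⌋₊ = n := Nat.floor_natCast n
  have hfloor2 : ⌊(n:ℝ)/2⌋₊ = n/2 := by
    rw [show ((2:ℝ)) = ((2:ℕ):ℝ) by norm_num, Nat.floor_div_natCast, Nat.floor_natCast]
  have hsub : (Finset.range (n/2+1)).filter Nat.Prime ⊆ (Finset.range (n+1)).filter Nat.Prime :=
    Finset.filter_subset_filter _ (Finset.range_subset_range.2 (by omega))
  have hdiff : thetaR n - thetaR ((n:ℝ)/2)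
      = ∑ p ∈ (Finset.range (n+1)).filter Nat.Prime
          \ (Finset.range (n/2+1)).filter Nat.Prime, Real.log p := by
    unfold thetaR
    rw [hfloor1, hfloor2, ← Finset.sum_sdiff hsub]
    ring
  rw [hdiff]
  have hexp : Real.exp (∑ p ∈ (Finset.range (n+1)).filter Nat.Prime
          \ (Finset.range (n/2+1)).filter Nat.Prime, Real.log p)
      = ((∏ p ∈ (Finset.range (n+1)).filter Nat.Prime
          \ (Finset.range (n/2+1)).filter Nat.Prime, p : ℕ) : ℝ) := by
    rw [Real.exp_sum]
    push_cast
    apply Finset.prod_congr rfl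
    intro p hp
    have hpp : p.Prime := (Finset.mem_filter.1 (Finset.mem_sdiff.1 hp).1).2
    exact Real.exp_log (by exact_mod_cast hpp.pos)
  rw [hexp]
  exact_mod_cast Nat.le_of_dvd (Q_pos n) (mid_prod_dvd hn)

lemma part3 {n : ℕ} (hn : 4 ≤ n) :
    (Q n : ℝ) < Real.exp ((n : ℝ) + 793 * n / (200 * Real.log n)) := by
  have hn1 : (1:ℝ) < n := by exact_mod_cast (by omega : 1 < n)
  have hL : 0 < Real.log n := Real.log_pos hn1
  have hQ : (0:ℝ) < Q n := by exact_mod_cast Q_pos n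
  have l2u := Real.log_two_lt_d9
  have l2l := Real.log_two_gt_d9
  rw [show (Q n : ℝ) = Real.exp (Real.log (Q n)) from (Real.exp_log hQ).symm,
    Real.exp_lt_exp]
  by_cases hbig : 1000 ≤ n
  · -- big case
    have hcast : (Q n : ℝ) ≤ 2^n * n * 4^(Nat.sqrt n) := by exact_mod_cast Q_upper hn
    have hlogQ : Real.log (Q n) ≤ (n:ℝ) * Real.log 2 + Real.log n
        + (Nat.sqrt n : ℝ) * Real.log 4 := by
      calc Real.log (Q n) ≤ Real.log ((2:ℝ)^n * n * 4^(Nat.sqrt n)) := Real.log_le_log hQ hcast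
        _ = (n:ℝ) * Real.log 2 + Real.log n + (Nat.sqrt n : ℝ) * Real.log 4 := by
          rw [Real.log_mul (by positivity) (by positivity),
            Real.log_mul (by positivity) (by positivity), Real.log_pow, Real.log_pow]
    have hlog4 : Real.log 4 = 2 * Real.log 2 := by
      rw [show (4:ℝ) = 2^2 by norm_num, Real.log_pow]
      norm_num
    have hs : (Nat.sqrt n : ℝ) ≤ Real.sqrt n := by
      rw [Real.le_sqrt (by positivity) (by positivity)]
      exact_mod_cast Nat.sqrt_le' n
    set t := Real.sqrt (Real.sqrt n) with htdef
    have ht0 : 0 ≤ t := Real.sqrt_nonneg _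
    have ht2 : t^2 = Real.sqrt n := Real.sq_sqrt (Real.sqrt_nonneg _)
    have ht4 : t^4 = n := by
      rw [show (4:ℕ) = 2*2 from rfl, pow_mul, ht2, Real.sq_sqrt (by positivity)]
    have ht5 : 5 ≤ t := by
      have h1000 : (1000:ℝ) ≤ t^4 := by rw [ht4]; exact_mod_cast hbig
      by_contra hc
      push_neg at hc
      have := pow_le_pow_left₀ ht0 hc.le 4
      norm_num at this
      linarith
    have htpos : 0 < t := by linarith
    have hlogn : Real.log n ≤ 4*(t-1) := by
      have : Real.log n = 4 * Real.log t := by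
        rw [← ht4, Real.log_pow]
        norm_num
      rw [this]
      have := Real.log_le_sub_one_of_pos htpos
      linarith
    have hpoly : 4*(t-1) + 2*t^2*Real.log 2 ≤ t^4*(1-Real.log 2) := by
      nlinarith [sq_nonneg t, sq_nonneg (t-5), pow_le_pow_left₀ (by norm_num : (0:ℝ) ≤ 5) ht5 4]
    have hmain : (n:ℝ) * Real.log 2 + Real.log n + (Nat.sqrt n : ℝ) * Real.log 4 ≤ (n:ℝ) := by
      have h1 : (Nat.sqrt n : ℝ) * Real.log 4 ≤ Real.sqrt n * Real.log 4 := by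
        apply mul_le_mul_of_nonneg_right hs
        rw [hlog4]; linarith
      have h2 : Real.sqrt n * Real.log 4 = 2*t^2*Real.log 2 := by
        rw [hlog4, ← ht2]; ring
      have h3 : Real.log n ≤ 4*(t-1) := hlogn
      have h4 : (n:ℝ) = t^4 := ht4.symm
      nlinarith [hpoly]
    have hpos : 0 < 793 * (n:ℝ) / (200 * Real.log n) := by positivity
    linarith
  · -- small case: n ≤ 999
    push_neg at hbig
    have hcast : (Q n : ℝ) ≤ 4^n := by
      calc (Q n : ℝ) ≤ (primorial n : ℝ) := by exact_mod_cast Q_le_primorial n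
      _ ≤ ((4^n : ℕ) : ℝ) := by exact_mod_cast primorial_le_4_pow n
      _ = 4^n := by push_cast; ring
    have hlogQ : Real.log (Q n) ≤ (n:ℝ) * (2 * Real.log 2) := by
      calc Real.log (Q n) ≤ Real.log ((4:ℝ)^n) := Real.log_le_log hQ hcast
        _ = (n:ℝ) * Real.log 4 := by rw [Real.log_pow]
        _ = (n:ℝ) * (2 * Real.log 2) := by
          rw [show (4:ℝ) = 2^2 by norm_num, Real.log_pow]
          norm_num
    have hLle : Real.log n ≤ 10 * Real.log 2 := by
      calc Real.log n ≤ Real.log (2^10 : ℝ) :=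
        Real.log_le_log (by positivity) (by exact_mod_cast (by omega : n ≤ 2^10))
      _ = 10 * Real.log 2 := by rw [Real.log_pow]; norm_num
    have key : (2*Real.log 2 - 1) * Real.log n < 793/200 := by nlinarith
    have h200L : (0:ℝ) < 200 * Real.log n := by positivity
    have : (n:ℝ) * (2*Real.log 2) - n < 793 * n / (200 * Real.log n) := by
      rw [lt_div_iff₀ h200L]
      have hn0 : (4:ℝ) ≤ n := by exact_mod_cast hn
      nlinarith [mul_lt_mul_of_pos_left key (by linarith : (0:ℝ) < n)]
    linarith

lemma part2 {n : ℕ} (hn : 4 ≤ n) :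
    Real.exp ((n : ℝ) / 2 - (793 / 200) * n *
        (1 / Real.log n + 1 / (2 * Real.log ((n : ℝ) / 2)))) < (Q n : ℝ) := by
  have hn1 : (1:ℝ) < n := by exact_mod_cast (by omega : 1 < n)
  have hL : 0 < Real.log n := Real.log_pos hn1
  have hM : 0 < Real.log ((n:ℝ)/2) := by
    apply Real.log_pos
    have : (4:ℝ) ≤ n := by exact_mod_cast hn
    linarith
  have hML : Real.log ((n:ℝ)/2) ≤ Real.log n := by
    apply Real.log_le_log (by positivity)
    have : (0:ℝ) ≤ n := by positivity
    linarith
  have hQ : (0:ℝ) < Q n := by exact_mod_cast Q_pos n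
  have l2u := Real.log_two_lt_d9
  have l2l := Real.log_two_gt_d9
  by_cases hsmall : n ≤ 131072
  · -- exponent ≤ 0, Q ≥ 3
    have hLle : Real.log n ≤ 17 * Real.log 2 := by
      calc Real.log n ≤ Real.log (2^17 : ℝ) :=
        Real.log_le_log (by positivity) (by exact_mod_cast (by omega : n ≤ 2^17))
      _ = 17 * Real.log 2 := by rw [Real.log_pow]; norm_num
    have hexp0 : (n:ℝ)/2 - (793/200) * n *
        (1 / Real.log n + 1 / (2 * Real.log ((n:ℝ)/2))) ≤ 0 := by
      have hn4 : (4:ℝ) ≤ n := by exact_mod_cast hn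
      set L := Real.log n
      set M := Real.log ((n:ℝ)/2)
      have hA : 1/(17*Real.log 2) ≤ 1/L := one_div_le_one_div_of_le hL hLle
      have hB : 1/(34*Real.log 2) ≤ 1/(2*M) := by
        apply one_div_le_one_div_of_le (by linarith)
        linarith
      have key : 1/2 ≤ (793/200)*(1/(17*Real.log 2) + 1/(34*Real.log 2)) := by
        have hval : 1/(17*Real.log 2) + 1/(34*Real.log 2) = 3/(34*Real.log 2) := by
          field_simp
          ring
        rw [hval]
        have heq : (793/200)*(3/(34*Real.log 2)) = 2379/(6800*Real.log 2) := by ring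
        rw [heq, le_div_iff₀ (by positivity)]
        linarith
      have hkey2 : (n:ℝ) * (1/2) ≤ n * ((793/200)*(1/(17*Real.log 2) + 1/(34*Real.log 2))) :=
        mul_le_mul_of_nonneg_left key (by linarith)
      have hmono : (n:ℝ) * ((793/200)*(1/(17*Real.log 2) + 1/(34*Real.log 2)))
          ≤ (793/200)*n*(1/L + 1/(2*M)) := by
        have hsum : (1/(17*Real.log 2) + 1/(34*Real.log 2)) ≤ (1/L + 1/(2*M)) := by linarith
        nlinarith [hsum, hn4]
      linarith
    calc Real.exp ((n:ℝ)/2 - (793/200) * n *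
          (1 / Real.log n + 1 / (2 * Real.log ((n:ℝ)/2))))
        ≤ Real.exp 0 := Real.exp_le_exp.2 hexp0
      _ = 1 := Real.exp_zero
      _ < 3 := by norm_num
      _ ≤ (Q n : ℝ) := by exact_mod_cast Q_ge_three hn
  · -- big case
    push_neg at hsmall
    rw [show (Q n : ℝ) = Real.exp (Real.log (Q n)) from (Real.exp_log hQ).symm,
      Real.exp_lt_exp]
    -- log Q ≥ n log 2 - log (n+1) - sqrt n * log n
    have hcast : (2:ℝ)^n ≤ ((n:ℝ)+1) * Q n * (n:ℝ)^(Nat.sqrt n) := by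
      exact_mod_cast Q_lower hn
    have hlogQ : (n:ℝ) * Real.log 2 - Real.log ((n:ℝ)+1) - Real.sqrt n * Real.log n
        ≤ Real.log (Q n) := by
      have h1 : Real.log ((2:ℝ)^n) ≤ Real.log (((n:ℝ)+1) * Q n * (n:ℝ)^(Nat.sqrt n)) :=
        Real.log_le_log (by positivity) hcast
      rw [Real.log_pow, Real.log_mul (by positivity) (by positivity),
        Real.log_mul (by positivity) (by positivity), Real.log_pow] at h1
      have hs : (Nat.sqrt n : ℝ) ≤ Real.sqrt n := by
        rw [Real.le_sqrt (by positivity) (by positivity)]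
        exact_mod_cast Nat.sqrt_le' n
      have hs2 : (Nat.sqrt n : ℝ) * Real.log n ≤ Real.sqrt n * Real.log n :=
        mul_le_mul_of_nonneg_right hs hL.le
      linarith
    -- n/2 < n log 2 - log(n+1) - sqrt n log n
    set u := Real.sqrt (Real.sqrt (Real.sqrt n)) with hudef
    have hu0 : 0 ≤ u := Real.sqrt_nonneg _
    have hu2 : u^2 = Real.sqrt (Real.sqrt n) := Real.sq_sqrt (Real.sqrt_nonneg _)
    have hu4 : u^4 = Real.sqrt n := by
      have h44 : u^4 = (u^2)^2 := by ring
      rw [h44, hu2, Real.sq_sqrt (Real.sqrt_nonneg _)]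
    have hu8 : u^8 = n := by
      have h88 : u^8 = (u^4)^2 := by ring
      rw [h88, hu4, Real.sq_sqrt (by positivity : (0:ℝ) ≤ (n:ℝ))]
    have hu435 : (4.35:ℝ) ≤ u := by
      have h131 : (131073:ℝ) ≤ u^8 := by
        rw [hu8]; exact_mod_cast (by omega : 131073 ≤ n)
      by_contra hc
      push_neg at hc
      have := pow_le_pow_left₀ hu0 hc.le 8
      norm_num at this
      linarith
    have hupos : 0 < u := by linarith
    have hlogn8 : Real.log n ≤ 8*(u-1) := by
      have h8 : Real.log n = 8 * Real.log u := by rw [← hu8, Real.log_pow]; norm_num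
      have := Real.log_le_sub_one_of_pos hupos
      rw [h8]; linarith
    have hlogn1 : Real.log ((n:ℝ)+1) ≤ 1 + 8*(u-1) := by
      have hc2 : (n:ℝ)+1 ≤ 2*n := by
        have : (4:ℝ) ≤ n := by exact_mod_cast hn
        linarith
      calc Real.log ((n:ℝ)+1) ≤ Real.log (2*n) := Real.log_le_log (by positivity) hc2
        _ = Real.log 2 + Real.log n := Real.log_mul (by norm_num) (by positivity)
        _ ≤ 1 + 8*(u-1) := by linarith
    have hP : u^8/2 < u^8*Real.log 2 - (1+8*(u-1)) - u^4*(8*(u-1)) := by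
      nlinarith [pow_le_pow_left₀ (by norm_num : (0:ℝ) ≤ 4.35) hu435 3, sq_nonneg u,
        mul_le_mul_of_nonneg_right (pow_le_pow_left₀ (by norm_num : (0:ℝ) ≤ 4.35) hu435 3)
          (pow_nonneg hu0 5), pow_nonneg hu0 4, pow_nonneg hu0 5]
    have hpoly : (n:ℝ)/2 < (n:ℝ)*Real.log 2 - Real.log ((n:ℝ)+1) - Real.sqrt n * Real.log n := by
      have hsq : Real.sqrt (n:ℝ) * Real.log n ≤ u^4 * (8*(u-1)) := by
        rw [← hu4]
        exact mul_le_mul_of_nonneg_left hlogn8 (by positivity)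
      have hnu : (n:ℝ) = u^8 := hu8.symm
      have hnu2 : (n:ℝ) * Real.log 2 = u^8 * Real.log 2 := by rw [hnu]
      linarith
    have hxle : 0 ≤ (793/200) * (n:ℝ) * (1/Real.log n + 1/(2*Real.log ((n:ℝ)/2))) := by positivity
    linarith

end MSPaux

theorem minSquarePerfecter_factorial_bounds (n : ℕ) (hn : 4 ≤ n) :
    Real.exp (thetaR n - thetaR ((n : ℝ) / 2)) ≤
        (minSquarePerfecter (Nat.factorial n) : ℝ) ∧
      Real.exp ((n : ℝ) / 2 - (793 / 200) * n *
            (1 / Real.log n + 1 / (2 * Real.log ((n : ℝ) / 2)))) <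
        (minSquarePerfecter (Nat.factorial n) : ℝ) ∧
      (minSquarePerfecter (Nat.factorial n) : ℝ) <
        Real.exp ((n : ℝ) + 793 * n / (200 * Real.log n)) := by
  have hmsp : minSquarePerfecter (Nat.factorial n) = MSPaux.Q n := MSPaux.msp_eq n
  rw [hmsp]
  exact ⟨MSPaux.part1 hn, MSPaux.part2 hn, MSPaux.part3 hn⟩
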